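/- Let E be a finite-dimensional real inner product space and let X and Y be nonempty compact convex subsets of E with Y ⊆ X. Then 0 ∈ Z for every Z ∈ X ÷ Y. -/

import Mathlib

/-!
If `0 ∉ Z`, a continuous linear functional `f` is negative on the closed convex set `Z`.
Let `y ∈ Y` maximize `f` over the compact set `Y`. Writing `y = y' + z` with `y' ∈ Y`, `z ∈ Z`
gives `f y = f y' + f z < f y'`, contradicting maximality.
-/

open Pointwise
open scoped RealInnerProductSpace

/-- The support function of a set `A ⊆ E`: `h_A(p) = sup_{a ∈ A} ⟪p, a⟫`. -/
noncomputable def supportFn {E : Type*} [NormedAddCommGroup E] [InnerProductSpace ℝ E]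
    (A : Set E) (p : E) : ℝ :=
  sSup ((fun a => ⟪p, a⟫) '' A)

/-- `Z` is a member of the generalized Minkowski–Pontryagin difference `X ÷ Y`:
`Z` is nonempty, compact, convex, `X ⊆ Y + Z`, and no nonempty compact convex
proper subset `Z' ⊊ Z` satisfies `X ⊆ Y + Z'`. -/
def MemGMPDiff {E : Type*} [NormedAddCommGroup E] [InnerProductSpace ℝ E]
    (X Y Z : Set E) : Prop :=
  Z.Nonempty ∧ IsCompact Z ∧ Convex ℝ Z ∧ X ⊆ Y + Z ∧
    ∀ Z' : Set E, Z'.Nonempty → IsCompact Z' → Convex ℝ Z' → Z' ⊂ Z → ¬ X ⊆ Y + Z'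

theorem zero_mem_of_subset_add_self {E : Type*} [TopologicalSpace E] [AddCommGroup E]
    [Module ℝ E] [IsTopologicalAddGroup E] [ContinuousSMul ℝ E] [LocallyConvexSpace ℝ E]
    {Y Z : Set E} (hYne : Y.Nonempty) (hYc : IsCompact Y) (hZconv : Convex ℝ Z)
    (hZcl : IsClosed Z) (hYZ : Y ⊆ Y + Z) : (0 : E) ∈ Z := by
  by_contra h0
  obtain ⟨f, u, hfZ, hu⟩ := geometric_hahn_banach_closed_point hZconv hZcl h0
  obtain ⟨y, hy, hmax⟩ := hYc.exists_isMaxOn hYne f.continuous.continuousOn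
  obtain ⟨y', hy', z, hz, rfl⟩ := hYZ hy
  have hfz : f z < 0 := (hfZ z hz).trans (by simpa using hu)
  have hle : f y' ≤ f (y' + z) := hmax hy'
  rw [map_add] at hle
  linarith

theorem gmpDiff_monotonicity_general
    {E : Type*} [NormedAddCommGroup E] [InnerProductSpace ℝ E]
    (X Y : Set E)
    (hYne : Y.Nonempty) (hYc : IsCompact Y)
    (hYX : Y ⊆ X) :
    ∀ Z : Set E, MemGMPDiff X Y Z → (0 : E) ∈ Z := by
  rintro Z ⟨-, hZc, hZconv, hXYZ, -⟩
  exact zero_mem_of_subset_add_self hYne hYc hZconv hZc.isClosed (hYX.trans hXYZ)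

theorem gmpDiff_monotonicity
    {E : Type*} [NormedAddCommGroup E] [InnerProductSpace ℝ E] [FiniteDimensional ℝ E]
    (X Y : Set E)
    (hXne : X.Nonempty) (hXc : IsCompact X) (hXconv : Convex ℝ X)
    (hYne : Y.Nonempty) (hYc : IsCompact Y) (hYconv : Convex ℝ Y)
    (hYX : Y ⊆ X) :
    ∀ Z : Set E, MemGMPDiff X Y Z → (0 : E) ∈ Z :=
  gmpDiff_monotonicity_general X Y hYne hYc hYX
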